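/- Let p be a prime, m ∈ ℕ ∪ {∞}, and s ∈ ℂ with 0 < |s| < 1. Equip ℝ × ℤ_p with the metric ρ̂((ξ,x),(η,y)) = max(|ξ−η|, |x−y|_p^{1/D_s}). Then: (1) there exists C > 0 such that for all (ξ,x),(η,y) ∈ ℝ × ℤ_p, max(|ξ−η|, |ω_s^{(m)}(ξ,x) − ω_s^{(m)}(η,y)|) ≤ C·ρ̂((ξ,x),(η,y)), i.e. the map (ξ,x) ↦ (ξ, ω_s^{(m)}(ξ,x)) is Lipschitz; (2) if moreover Δ̃_s^m > 0, then there also exists c > 0 such that c·ρ̂((ξ,x),(η,y)) ≤ max(|ξ−η|, |ω_s^{(m)}(ξ,x) − ω_s^{(m)}(η,y)|) for all (ξ,x),(η,y), i.e. this map is a bi-Lipschitz embedding. -/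

import Mathlib

open scoped ENNReal MeasureTheory

noncomputable section

/-- The digit expansion of `p`-adic numbers: `digit x n` is the coefficient of `pⁿ`
in the canonical expansion `x = Σ_{n ≥ v(x)} (digit x n)·pⁿ` with digits in `{0,…,p−1}`. -/
structure PadicDigits (p : ℕ) [Fact p.Prime] : Type where
  digit : ℚ_[p] → ℤ → ℕ
  digit_lt : ∀ x n, digit x n < p
  digit_zero : ∀ n, digit 0 n = 0
  digit_eq_zero_of_lt : ∀ x : ℚ_[p], x ≠ 0 → ∀ n : ℤ, n < x.valuation → digit x n = 0
  digit_valuation_ne_zero : ∀ x : ℚ_[p], x ≠ 0 → digit x x.valuation ≠ 0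
  expansion : ∀ x : ℚ_[p], x = ∑' n : ℤ, (digit x n : ℚ_[p]) * (p : ℚ_[p]) ^ n

variable {p : ℕ} [Fact p.Prime]

/-- `χ_n^{(m)}(x) = exp((2πi/p) Σ_{k=0}^{m} x_{n−k} p^{−k})`, where `m ∈ ℕ ∪ {∞}`. -/
def chiFn (D : PadicDigits p) (m : ℕ∞) (x : ℚ_[p]) (n : ℤ) : ℂ :=
  Complex.exp (((2 * Real.pi / p *
      ∑' k : ℕ, if (k : ℕ∞) ≤ m then (D.digit x (n - k) : ℝ) / (p : ℝ) ^ k else 0 : ℝ) : ℂ)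
    * Complex.I)

/-- `Υ_s^{(m)}(x) = Σ_{n<0} sⁿ(χ_n^{(m)}(x) − 1) + Σ_{n≥0} sⁿ χ_n^{(m)}(x)`. -/
def Upsilon (D : PadicDigits p) (m : ℕ∞) (s : ℂ) (x : ℚ_[p]) : ℂ :=
  ∑' n : ℤ, s ^ n * (chiFn D m x n - if n < 0 then 1 else 0)

/-- `Δ_s^{(m)} = inf{ |Υ_s^{(m)}(x) − Υ_s^{(m)}(y)| : x, y ∈ ℚ_p, |x−y|_p = 1 }`. -/
def Delta (D : PadicDigits p) (m : ℕ∞) (s : ℂ) : ℝ :=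
  sInf {r : ℝ | ∃ x y : ℚ_[p], ‖x - y‖ = 1 ∧
    r = ‖Upsilon D m s x - Upsilon D m s y‖}

/-- The scaling dimension `D_s = −1/log_p |s|`. -/
def scalingDim (p : ℕ) (s : ℂ) : ℝ := -1 / Real.logb p ‖s‖

/-- The Heaviside factor `θ(p^{m−n} − |x|_p)` (`θ` the indicator of `[0,∞)`);
for `m = ∞` it equals `1`. -/
def thetaFac (p : ℕ) [Fact p.Prime] (m : ℕ∞) (n : ℕ) (x : ℤ_[p]) : ℝ :=
  match m with
  | ⊤ => 1
  | (k : ℕ) => if 0 ≤ (p : ℝ) ^ ((k : ℤ) - n) - ‖x‖ then 1 else 0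

/-- The exponent `min(n,m) + 1` (equal to `n + 1` when `m = ∞`). -/
def minExp (m : ℕ∞) (n : ℕ) : ℕ :=
  match m with
  | ⊤ => n + 1
  | (k : ℕ) => min n k + 1

/-- `ω_s^{(m)}(ξ,x) = Σ_{n≥0} sⁿ exp(2πiξ·θ(p^{m−n}−|x|_p)/p^{min(n,m)+1})·χ_n^{(m)}(x)`. -/
def omegaM (D : PadicDigits p) (m : ℕ∞) (s : ℂ) (ξ : ℝ) (x : ℤ_[p]) : ℂ :=
  ∑' n : ℕ, s ^ n *
    Complex.exp (((2 * Real.pi * ξ * thetaFac p m n x / (p : ℝ) ^ minExp m n : ℝ) : ℂ)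
      * Complex.I) * chiFn D m (x : ℚ_[p]) n

/-- `Δ̃_s^m = inf{ |s|^{−v(x−y)}·|ω_s^{(m)}(ξ,x) − ω_s^{(m)}(ξ,y)| : ξ ∈ ℝ, x ≠ y ∈ ℤ_p }`. -/
def DeltaTilde (D : PadicDigits p) (m : ℕ∞) (s : ℂ) : ℝ :=
  sInf {r : ℝ | ∃ (ξ : ℝ) (x y : ℤ_[p]), x ≠ y ∧
    r = ‖s‖ ^ (-(((x : ℚ_[p]) - (y : ℚ_[p])).valuation)) *
      ‖omegaM D m s ξ x - omegaM D m s ξ y‖}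

namespace OmegaAux

open Complex

variable {p : ℕ} [Fact p.Prime]

lemma p_one_lt : (1:ℝ) < (p:ℝ) := by exact_mod_cast (Fact.out : p.Prime).one_lt

/-- |e^{ia} - e^{ib}| ≤ |a - b| -/
lemma abs_exp_mul_I_sub (a b : ℝ) :
    ‖Complex.exp ((a:ℂ) * I) - Complex.exp ((b:ℂ) * I)‖ ≤ |a - b| := by
  have key : ∀ t : ℝ, ‖Complex.exp ((t:ℂ) * I) - 1‖ ≤ |t| := by
    intro t
    have hre : (Complex.exp ((t:ℂ) * I) - 1).re = Real.cos t - 1 := by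
      simp [Complex.exp_ofReal_mul_I_re]
    have him : (Complex.exp ((t:ℂ) * I) - 1).im = Real.sin t := by
      simp [Complex.exp_ofReal_mul_I_im]
    rw [Complex.norm_def, Complex.normSq_apply, hre, him]
    have h1 : (Real.cos t - 1) * (Real.cos t - 1) + Real.sin t * Real.sin t ≤ t ^ 2 := by
      have hc := Real.one_sub_sq_div_two_le_cos (x := t)
      have hs := Real.sin_sq_add_cos_sq t
      nlinarith
    calc Real.sqrt ((Real.cos t - 1) * (Real.cos t - 1) + Real.sin t * Real.sin t)
        ≤ Real.sqrt (t ^ 2) := Real.sqrt_le_sqrt h1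
      _ = |t| := Real.sqrt_sq_eq_abs t
  have factor : Complex.exp ((a:ℂ) * I) - Complex.exp ((b:ℂ) * I)
      = Complex.exp ((b:ℂ) * I) * (Complex.exp (((a - b : ℝ):ℂ) * I) - 1) := by
    rw [mul_sub, mul_one, ← Complex.exp_add]
    push_cast
    ring_nf
  rw [factor, norm_mul, Complex.norm_exp_ofReal_mul_I, one_mul]
  exact key _

lemma abs_chi (D : PadicDigits p) (m : ℕ∞) (x : ℚ_[p]) (n : ℤ) :
    ‖chiFn D m x n‖ = 1 := Complex.norm_exp_ofReal_mul_I _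

set_option maxHeartbeats 1000000 in
lemma summable_expansion (D : PadicDigits p) (x : ℚ_[p]) :
    Summable (fun n : ℤ => (D.digit x n : ℚ_[p]) * (p : ℚ_[p]) ^ n) := by
  by_cases hx : x = 0
  · subst hx
    simp only [D.digit_zero]
    simpa using summable_zero
  · apply Summable.of_norm
    set v := x.valuation with hv
    have hinj : Function.Injective (fun k : ℕ => v + (k:ℤ)) := by
      intro a b hab; simpa using hab
    have hsupp : ∀ (n : ℤ), n ∉ Set.range (fun k : ℕ => v + (k:ℤ)) →
        ‖(D.digit x n : ℚ_[p]) * (p : ℚ_[p]) ^ n‖ = 0 := by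
      intro n hn
      have hlt : n < v := by
        by_contra hge
        push_neg at hge
        exact hn ⟨(n - v).toNat, by show v + ((n - v).toNat : ℤ) = n; omega⟩
      rw [D.digit_eq_zero_of_lt x hx n hlt]
      simp
    refine (Function.Injective.summable_iff hinj hsupp).mp ?_
    refine Summable.of_nonneg_of_le (f := fun k => (p:ℝ) ^ (-v) * ((p:ℝ)⁻¹) ^ k)
        (fun k => norm_nonneg _) (fun k => ?_) ?_
    · 
      simp only [Function.comp_apply, norm_mul]
      have h1 : ‖((D.digit x (v + k) : ℤ) : ℚ_[p])‖ ≤ 1 := Padic.norm_int_le_one _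
      have h1' : ‖((D.digit x (v + k) : ℕ) : ℚ_[p])‖ ≤ 1 := by
        push_cast at h1 ⊢; exact h1
      have h2 : ‖(p : ℚ_[p]) ^ (v + (k:ℤ))‖ = (p:ℝ) ^ (-(v + (k:ℤ))) :=
        Padic.norm_p_zpow _
      calc ‖((D.digit x (v + k) : ℕ) : ℚ_[p])‖ * ‖(p : ℚ_[p]) ^ (v + (k:ℤ))‖
          ≤ 1 * (p:ℝ) ^ (-(v + (k:ℤ))) := by rw [h2]; gcongr
        _ = (p:ℝ) ^ (-v) * ((p:ℝ)⁻¹) ^ k := by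
            rw [one_mul, neg_add, zpow_add₀ (by exact_mod_cast (Fact.out : p.Prime).ne_zero : (p:ℝ) ≠ 0)]
            congr 1
            rw [inv_pow, ← zpow_natCast, ← zpow_neg]
    · exact Summable.mul_left _ (summable_geometric_of_lt_one (by positivity)
        (inv_lt_one_of_one_lt₀ p_one_lt))

lemma digit_eq_of_norm_sub_le (D : PadicDigits p) {x y : ℚ_[p]} {v j : ℤ} (hj : j < v)
    (h : ‖x - y‖ ≤ (p : ℝ) ^ (-v)) : D.digit x j = D.digit y j := by
  classical
  by_contra hne
  set P : ℤ → Prop := fun n => D.digit x n ≠ D.digit y n with hP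
  have hdig : ∀ n, P n → min x.valuation y.valuation ≤ n := by
    intro n hn
    by_contra hlt
    push_neg at hlt
    have hx0 : D.digit x n = 0 := by
      by_cases hx : x = 0
      · simp [hx, D.digit_zero]
      · exact D.digit_eq_zero_of_lt x hx n (lt_of_lt_of_le hlt (min_le_left _ _))
    have hy0 : D.digit y n = 0 := by
      by_cases hy : y = 0
      · simp [hy, D.digit_zero]
      · exact D.digit_eq_zero_of_lt y hy n (lt_of_lt_of_le hlt (min_le_right _ _))
    exact hn (hx0.trans hy0.symm)
  obtain ⟨j0, hj0P, hj0min⟩ := Int.exists_least_of_bdd ⟨_, hdig⟩ ⟨j, hne⟩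
  have hj0v : j0 < v := lt_of_le_of_lt (hj0min j hne) hj
  set f : ℤ → ℚ_[p] :=
    fun n => ((D.digit x n : ℚ_[p]) - (D.digit y n : ℚ_[p])) * (p : ℚ_[p]) ^ n with hf
  have hsum : Summable f := by
    have := (summable_expansion D x).sub (summable_expansion D y)
    apply this.congr
    intro n; simp [hf]; ring
  have hxy : x - y = ∑' n, f n := by
    have hx := D.expansion x
    have hy := D.expansion y
    calc x - y = (∑' n : ℤ, (D.digit x n : ℚ_[p]) * (p:ℚ_[p]) ^ n)
        - ∑' n : ℤ, (D.digit y n : ℚ_[p]) * (p:ℚ_[p]) ^ n := by rw [← hx, ← hy]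
      _ = ∑' n, f n := by
          rw [← Summable.tsum_sub (summable_expansion D x) (summable_expansion D y)]
          congr 1; funext n; simp [hf]; ring
  have hnormf : ∀ n : ℤ, ‖f n‖ ≤ (p:ℝ) ^ (-n) := by
    intro n
    have h1 : ‖((D.digit x n : ℚ_[p]) - (D.digit y n : ℚ_[p]))‖ ≤ 1 := by
      have := Padic.norm_int_le_one (p := p) ((D.digit x n : ℤ) - (D.digit y n : ℤ))
      push_cast at this ⊢
      exact this
    calc ‖f n‖ = ‖(D.digit x n : ℚ_[p]) - (D.digit y n : ℚ_[p])‖ * ‖(p:ℚ_[p]) ^ n‖ := norm_mul _ _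
      _ ≤ 1 * (p:ℝ) ^ (-n) := by rw [Padic.norm_p_zpow]; gcongr
      _ = (p:ℝ) ^ (-n) := one_mul _
  have hrest : ‖∑' n : ℤ, ite (n = j0) 0 (f n)‖ ≤ (p:ℝ) ^ (-(j0 + 1)) := by
    apply IsUltrametricDist.norm_tsum_le_of_forall_le_of_nonneg (by positivity)
    intro n
    rcases lt_trichotomy n j0 with hlt | heq | hgt
    · have : D.digit x n = D.digit y n := by
        by_contra hne'
        exact absurd (hj0min n hne') (by omega)
      simp [hf, hlt.ne, this]
      positivity
    · simp [heq]; positivity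
    · rw [if_neg (by omega)]
      refine (hnormf n).trans ?_
      exact zpow_le_zpow_right₀ p_one_lt.le (by omega)
  have hfj0 : ‖f j0‖ = (p:ℝ) ^ (-j0) := by
    have hd : ((D.digit x j0 : ℚ_[p]) - (D.digit y j0 : ℚ_[p]))
        = (((D.digit x j0 : ℤ) - (D.digit y j0 : ℤ) : ℤ) : ℚ_[p]) := by push_cast; ring
    have hdne : ((D.digit x j0 : ℤ) - (D.digit y j0 : ℤ)) ≠ 0 := by
      intro hcon
      exact hj0P (by omega)
    have hnd : ‖(((D.digit x j0 : ℤ) - (D.digit y j0 : ℤ) : ℤ) : ℚ_[p])‖ = 1 := by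
      refine le_antisymm (Padic.norm_int_le_one _) ?_
      by_contra hlt
      push_neg at hlt
      have hdvd := Padic.norm_intCast_lt_one_iff.mp hlt
      have habs : |(D.digit x j0 : ℤ) - (D.digit y j0 : ℤ)| < p := by
        have h1 := D.digit_lt x j0
        have h2 := D.digit_lt y j0
        rw [abs_lt]
        omega
      exact hdne (Int.eq_zero_of_abs_lt_dvd hdvd habs)
    rw [hf]
    simp only [norm_mul, hd, hnd, Padic.norm_p_zpow, one_mul]
  have hfull : ‖x - y‖ = (p:ℝ) ^ (-j0) := by
    rw [hxy, Summable.tsum_eq_add_tsum_ite hsum j0]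
    rw [Padic.add_eq_max_of_ne]
    · rw [hfj0]
      refine max_eq_left ?_
      refine hrest.trans ?_
      exact zpow_le_zpow_right₀ p_one_lt.le (by omega)
    · rw [hfj0]
      intro hcon
      have : (p:ℝ) ^ (-j0) ≤ (p:ℝ) ^ (-(j0+1)) := hcon ▸ hrest
      have h2 : (p:ℝ) ^ (-(j0+1)) < (p:ℝ) ^ (-j0) := by
        apply zpow_lt_zpow_right₀ p_one_lt (by omega)
      linarith
  have hlt2 : (p:ℝ) ^ (-v) < (p:ℝ) ^ (-j0) := zpow_lt_zpow_right₀ p_one_lt (by omega)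
  rw [hfull] at h
  linarith

lemma chi_eq (D : PadicDigits p) (m : ℕ∞) {x y : ℚ_[p]} {v n : ℤ} (hn : n < v)
    (h : ‖x - y‖ ≤ (p : ℝ) ^ (-v)) : chiFn D m x n = chiFn D m y n := by
  have hts : (∑' k : ℕ, if (k : ℕ∞) ≤ m then (D.digit x (n - k) : ℝ) / (p : ℝ) ^ k else 0)
      = (∑' k : ℕ, if (k : ℕ∞) ≤ m then (D.digit y (n - k) : ℝ) / (p : ℝ) ^ k else 0) := by
    refine tsum_congr fun k => ?_
    have hd : D.digit x (n - k) = D.digit y (n - k) :=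
      digit_eq_of_norm_sub_le D (by omega : n - (k:ℤ) < v) h
    rw [hd]
  unfold chiFn
  rw [hts]

lemma theta_nonneg (m : ℕ∞) (n : ℕ) (x : ℤ_[p]) : 0 ≤ thetaFac p m n x := by
  match m with
  | ⊤ => exact zero_le_one
  | (k : ℕ) =>
    show (0:ℝ) ≤ if 0 ≤ (p : ℝ) ^ ((k:ℤ) - n) - ‖x‖ then 1 else 0
    split <;> norm_num

lemma theta_le_one (m : ℕ∞) (n : ℕ) (x : ℤ_[p]) : thetaFac p m n x ≤ 1 := by
  match m with
  | ⊤ => exact le_refl 1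
  | (k : ℕ) =>
    show (if 0 ≤ (p : ℝ) ^ ((k:ℤ) - n) - ‖x‖ then (1:ℝ) else 0) ≤ 1
    split <;> norm_num

lemma theta_eq (m : ℕ∞) {x y : ℤ_[p]} {n : ℕ}
    (h : ‖x - y‖ ≤ (p : ℝ) ^ (-(n + 1) : ℤ)) : thetaFac p m n x = thetaFac p m n y := by
  match m with
  | ⊤ => rfl
  | (k : ℕ) =>
    show (if 0 ≤ (p : ℝ) ^ ((k:ℤ) - n) - ‖x‖ then (1:ℝ) else 0)
        = (if 0 ≤ (p : ℝ) ^ ((k:ℤ) - n) - ‖y‖ then (1:ℝ) else 0)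
    by_cases hxy : ‖x‖ = ‖y‖
    · rw [hxy]
    · have hmax : ‖x - y‖ = max ‖x‖ ‖y‖ := by
        have h0 := IsUltrametricDist.norm_sub_eq_max_of_norm_sub_ne_norm_sub x 0 y
          (by simpa using hxy)
        simpa using h0
      have hbound : (p:ℝ) ^ (-(n+1):ℤ) ≤ (p:ℝ) ^ ((k:ℤ) - n) :=
        zpow_le_zpow_right₀ p_one_lt.le (by omega)
      have hx : ‖x‖ ≤ (p:ℝ) ^ ((k:ℤ) - n) :=
        le_trans (le_trans (le_max_left _ _) (hmax ▸ h)) hbound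
      have hy : ‖y‖ ≤ (p:ℝ) ^ ((k:ℤ) - n) :=
        le_trans (le_trans (le_max_right _ _) (hmax ▸ h)) hbound
      rw [if_pos (by linarith), if_pos (by linarith)]

lemma abs_omega_term (D : PadicDigits p) (m : ℕ∞) (s : ℂ) (n : ℕ) (r : ℝ) (x : ℚ_[p]) :
    ‖s ^ n * Complex.exp ((r : ℂ) * Complex.I) * chiFn D m x n‖
      = ‖s‖ ^ n := by
  rw [norm_mul, norm_mul, norm_pow, Complex.norm_exp_ofReal_mul_I, abs_chi]
  ring

lemma summable_omega (D : PadicDigits p) (m : ℕ∞) {s : ℂ} (hs1 : ‖s‖ < 1)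
    (E : ℕ → ℝ) (x : ℚ_[p]) :
    Summable (fun n : ℕ => s ^ n * Complex.exp ((E n : ℂ) * Complex.I) * chiFn D m x n) := by
  apply Summable.of_norm
  have heq : ∀ n : ℕ, ‖s ^ n * Complex.exp ((E n : ℂ) * Complex.I) * chiFn D m x n‖
      = ‖s‖ ^ n := fun n => abs_omega_term D m s n (E n) x
  simp only [heq]
  exact summable_geometric_of_lt_one (norm_nonneg _) hs1

lemma omega_sub_xi (D : PadicDigits p) (m : ℕ∞) {s : ℂ} (hs1 : ‖s‖ < 1)
    (ξ η : ℝ) (x : ℤ_[p]) :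
    ‖omegaM D m s ξ x - omegaM D m s η x‖
      ≤ 2 * Real.pi * (1 - ‖s‖)⁻¹ * |ξ - η| := by
  set a := ‖s‖ with ha
  unfold omegaM
  rw [← Summable.tsum_sub
    (summable_omega D m hs1 (fun n => 2 * Real.pi * ξ * thetaFac p m n x / (p:ℝ) ^ minExp m n) _)
    (summable_omega D m hs1 (fun n => 2 * Real.pi * η * thetaFac p m n x / (p:ℝ) ^ minExp m n) _)]
  have hb : HasSum (fun n : ℕ => (2 * Real.pi * |ξ - η|) * a ^ n)
      ((2 * Real.pi * |ξ - η|) * (1 - a)⁻¹) :=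
    (hasSum_geometric_of_lt_one (norm_nonneg _) hs1).mul_left _
  refine le_trans (tsum_of_norm_bounded hb fun n => ?_) (le_of_eq (by ring))
  have hsplit : s ^ n * Complex.exp
        ((( 2 * Real.pi * ξ * thetaFac p m n x / (p:ℝ) ^ minExp m n : ℝ) : ℂ) * Complex.I)
        * chiFn D m (x : ℚ_[p]) n
      - s ^ n * Complex.exp
        ((( 2 * Real.pi * η * thetaFac p m n x / (p:ℝ) ^ minExp m n : ℝ) : ℂ) * Complex.I)
        * chiFn D m (x : ℚ_[p]) n
      = s ^ n * (Complex.exp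
        ((( 2 * Real.pi * ξ * thetaFac p m n x / (p:ℝ) ^ minExp m n : ℝ) : ℂ) * Complex.I)
        - Complex.exp
        ((( 2 * Real.pi * η * thetaFac p m n x / (p:ℝ) ^ minExp m n : ℝ) : ℂ) * Complex.I))
        * chiFn D m (x : ℚ_[p]) n := by ring
  rw [hsplit]
  rw [norm_mul, norm_mul, norm_pow, abs_chi, mul_one]
  have hexp : ‖Complex.exp
        ((( 2 * Real.pi * ξ * thetaFac p m n x / (p:ℝ) ^ minExp m n : ℝ) : ℂ) * Complex.I)
        - Complex.exp
        ((( 2 * Real.pi * η * thetaFac p m n x / (p:ℝ) ^ minExp m n : ℝ) : ℂ) * Complex.I)‖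
      ≤ 2 * Real.pi * |ξ - η| := by
    refine le_trans (abs_exp_mul_I_sub _ _) ?_
    have hP : (1:ℝ) ≤ (p:ℝ) ^ minExp m n := one_le_pow₀ (le_of_lt p_one_lt)
    have hθ1 := theta_le_one (p := p) m n x
    have hθ0 := theta_nonneg (p := p) m n x
    have hfrac : thetaFac p m n x / (p:ℝ) ^ minExp m n ≤ 1 := by
      rw [div_le_one (by linarith)]
      linarith
    have hfrac0 : 0 ≤ thetaFac p m n x / (p:ℝ) ^ minExp m n := by positivity
    have heq2 : 2 * Real.pi * ξ * thetaFac p m n x / (p:ℝ) ^ minExp m n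
        - 2 * Real.pi * η * thetaFac p m n x / (p:ℝ) ^ minExp m n
        = (ξ - η) * (2 * Real.pi * (thetaFac p m n x / (p:ℝ) ^ minExp m n)) := by ring
    rw [heq2, abs_mul]
    have hpi : |2 * Real.pi * (thetaFac p m n x / (p:ℝ) ^ minExp m n)| ≤ 2 * Real.pi := by
      rw [_root_.abs_of_nonneg (by positivity)]
      nlinarith [Real.pi_pos]
    calc |ξ - η| * |2 * Real.pi * (thetaFac p m n x / (p:ℝ) ^ minExp m n)|
        ≤ |ξ - η| * (2 * Real.pi) := by gcongr
      _ = 2 * Real.pi * |ξ - η| := by ring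
  calc a ^ n * ‖_‖ ≤ a ^ n * (2 * Real.pi * |ξ - η|) := by gcongr
    _ = 2 * Real.pi * |ξ - η| * a ^ n := by ring

lemma coe_sub_ne_zero {x y : ℤ_[p]} (hxy : x ≠ y) : (x : ℚ_[p]) - (y : ℚ_[p]) ≠ 0 := by
  intro hcon
  apply hxy
  have h2 : (x : ℚ_[p]) = (y : ℚ_[p]) := by linear_combination hcon
  exact Subtype.coe_injective h2

lemma val_nonneg {x y : ℤ_[p]} (hxy : x ≠ y) : 0 ≤ ((x : ℚ_[p]) - (y : ℚ_[p])).valuation := by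
  by_contra hneg
  push_neg at hneg
  have hz := coe_sub_ne_zero hxy
  have hnorm : ‖(x : ℚ_[p]) - (y : ℚ_[p])‖ = (p:ℝ) ^ (-((x : ℚ_[p]) - (y : ℚ_[p])).valuation) :=
    Padic.norm_eq_zpow_neg_valuation hz
  have hle1 : ‖(x : ℚ_[p]) - (y : ℚ_[p])‖ ≤ 1 := by
    have : ((x - y : ℤ_[p]) : ℚ_[p]) = (x : ℚ_[p]) - (y : ℚ_[p]) := by push_cast; ring
    rw [← this]
    exact PadicInt.norm_le_one _
  have hgt : (1:ℝ) < (p:ℝ) ^ (-((x : ℚ_[p]) - (y : ℚ_[p])).valuation) := by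
    have := zpow_lt_zpow_right₀ (p_one_lt (p := p)) (by omega : (0:ℤ) < -((x : ℚ_[p]) - (y : ℚ_[p])).valuation)
    simpa using this
  rw [hnorm] at hle1
  linarith

lemma norm_sub_eq {x y : ℤ_[p]} :
    ‖x - y‖ = ‖(x : ℚ_[p]) - (y : ℚ_[p])‖ := by
  rw [PadicInt.norm_def, PadicInt.coe_sub]

lemma omega_sub_x (D : PadicDigits p) (m : ℕ∞) {s : ℂ} (hs0 : 0 < ‖s‖)
    (hs1 : ‖s‖ < 1) (ξ : ℝ) {x y : ℤ_[p]} (hxy : x ≠ y) :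
    ‖omegaM D m s ξ x - omegaM D m s ξ y‖
      ≤ 2 * (1 - ‖s‖)⁻¹ * ‖s‖ ^ (((x : ℚ_[p]) - (y : ℚ_[p])).valuation) := by
  classical
  set a := ‖s‖ with ha
  set v : ℤ := ((x : ℚ_[p]) - (y : ℚ_[p])).valuation with hv
  have hz := coe_sub_ne_zero hxy
  have hv0 : 0 ≤ v := val_nonneg hxy
  set vn : ℕ := v.toNat with hvn
  have hvnv : (vn : ℤ) = v := Int.toNat_of_nonneg hv0
  have hnorm : ‖(x : ℚ_[p]) - (y : ℚ_[p])‖ = (p:ℝ) ^ (-v) := Padic.norm_eq_zpow_neg_valuation hz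
  set b : ℕ → ℝ := fun n => if n < vn then 0 else 2 * a ^ n with hbdef
  have hinj : Function.Injective (fun k : ℕ => vn + k) := fun a b h => by simpa using h
  have hrange : ∀ n ∉ Set.range (fun k : ℕ => vn + k), b n = 0 := by
    intro n hn
    have hlt : n < vn := by
      by_contra hge
      push_neg at hge
      exact hn ⟨n - vn, by show vn + (n - vn) = n; omega⟩
    simp [hbdef, hlt]
  have hcomp : HasSum (b ∘ fun k : ℕ => vn + k) (2 * a ^ vn * (1 - a)⁻¹) := by
    have hg := (hasSum_geometric_of_lt_one (norm_nonneg s) hs1).mul_left (2 * a ^ vn)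
    have heq : (b ∘ fun k : ℕ => vn + k) = fun k => 2 * a ^ vn * a ^ k := by
      funext k
      simp only [Function.comp_apply, hbdef, if_neg (by omega : ¬ vn + k < vn), pow_add]
      ring
    rw [heq]
    exact hg
  have hb : HasSum b (2 * a ^ vn * (1 - a)⁻¹) :=
    (Function.Injective.hasSum_iff hinj hrange).mp hcomp
  unfold omegaM
  rw [← Summable.tsum_sub
    (summable_omega D m hs1 (fun n => 2 * Real.pi * ξ * thetaFac p m n x / (p:ℝ) ^ minExp m n) _)
    (summable_omega D m hs1 (fun n => 2 * Real.pi * ξ * thetaFac p m n y / (p:ℝ) ^ minExp m n) _)]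
  refine le_trans (tsum_of_norm_bounded hb fun n => ?_) (le_of_eq ?_)
  · by_cases hn : n < vn
    · have hθ : thetaFac p m n x = thetaFac p m n y := by
        apply theta_eq
        rw [norm_sub_eq, hnorm]
        exact zpow_le_zpow_right₀ p_one_lt.le (by omega)
      have hχ : chiFn D m (x : ℚ_[p]) n = chiFn D m (y : ℚ_[p]) n := by
        apply chi_eq D m (v := v) (by omega : (n:ℤ) < v)
        exact le_of_eq hnorm
      rw [hθ, hχ, sub_self]
      simp [hbdef, hn]
    · simp only [hbdef, if_neg hn]
      refine le_trans (norm_sub_le _ _) (le_of_eq ?_)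
      rw [abs_omega_term, abs_omega_term]
      ring
  · have : a ^ vn = a ^ v := by
      rw [← hvnv, zpow_natCast]
    rw [this]
    ring

lemma one_div_scalingDim {s : ℂ} (hs0 : 0 < ‖s‖) (hs1 : ‖s‖ < 1) :
    1 / scalingDim p s = - Real.logb p (‖s‖) := by
  have hL : Real.logb p (‖s‖) < 0 :=
    Real.logb_neg (by exact_mod_cast p_one_lt (p := p)) hs0 hs1
  rw [scalingDim, one_div_div, div_neg, div_one]

lemma r_pos {s : ℂ} (hs0 : 0 < ‖s‖) (hs1 : ‖s‖ < 1) :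
    0 < 1 / scalingDim p s := by
  rw [one_div_scalingDim hs0 hs1]
  have hL : Real.logb p (‖s‖) < 0 :=
    Real.logb_neg (by exact_mod_cast p_one_lt (p := p)) hs0 hs1
  linarith

lemma norm_rpow_eq {s : ℂ} (hs0 : 0 < ‖s‖) (hs1 : ‖s‖ < 1)
    {x y : ℤ_[p]} (hxy : x ≠ y) :
    ‖x - y‖ ^ (1 / scalingDim p s)
      = ‖s‖ ^ (((x : ℚ_[p]) - (y : ℚ_[p])).valuation) := by
  set a := ‖s‖ with ha
  set v : ℤ := ((x : ℚ_[p]) - (y : ℚ_[p])).valuation with hv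
  have hz := coe_sub_ne_zero hxy
  have hp1 : (1:ℝ) < (p:ℝ) := p_one_lt
  have hp0 : (0:ℝ) < (p:ℝ) := by linarith
  rw [norm_sub_eq, Padic.norm_eq_zpow_neg_valuation hz, one_div_scalingDim hs0 hs1]
  rw [← Real.rpow_intCast ((p:ℝ)) (-v)]
  rw [← Real.rpow_mul hp0.le]
  have hexp : ((-v : ℤ) : ℝ) * (- Real.logb p a) = Real.logb p a * ((v:ℝ)) := by
    push_cast; ring
  rw [hexp, Real.rpow_mul hp0.le, Real.rpow_logb hp0 (by linarith) hs0]
  rw [Real.rpow_intCast]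

lemma deltaTilde_mul_le (D : PadicDigits p) (m : ℕ∞) {s : ℂ} (hs0 : 0 < ‖s‖)
    (ξ : ℝ) {x y : ℤ_[p]} (hxy : x ≠ y) :
    DeltaTilde D m s * ‖s‖ ^ (((x : ℚ_[p]) - (y : ℚ_[p])).valuation)
      ≤ ‖omegaM D m s ξ x - omegaM D m s ξ y‖ := by
  have hbdd : BddBelow {r : ℝ | ∃ (ξ : ℝ) (x y : ℤ_[p]), x ≠ y ∧
      r = ‖s‖ ^ (-(((x : ℚ_[p]) - (y : ℚ_[p])).valuation)) *
        ‖omegaM D m s ξ x - omegaM D m s ξ y‖} := by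
    refine ⟨0, fun r hr => ?_⟩
    obtain ⟨ξ', x', y', h', hr⟩ := hr
    rw [hr]
    have h1 := zpow_pos hs0 (-(((x' : ℚ_[p]) - (y' : ℚ_[p])).valuation))
    have h2 := norm_nonneg (omegaM D m s ξ' x' - omegaM D m s ξ' y')
    nlinarith
  have hmem : ‖s‖ ^ (-(((x : ℚ_[p]) - (y : ℚ_[p])).valuation)) *
      ‖omegaM D m s ξ x - omegaM D m s ξ y‖ ∈ {r : ℝ | ∃ (ξ : ℝ) (x y : ℤ_[p]),
      x ≠ y ∧ r = ‖s‖ ^ (-(((x : ℚ_[p]) - (y : ℚ_[p])).valuation)) *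
        ‖omegaM D m s ξ x - omegaM D m s ξ y‖} := ⟨ξ, x, y, hxy, rfl⟩
  have hle : DeltaTilde D m s ≤ ‖s‖ ^ (-(((x : ℚ_[p]) - (y : ℚ_[p])).valuation)) *
      ‖omegaM D m s ξ x - omegaM D m s ξ y‖ := csInf_le hbdd hmem
  set v : ℤ := ((x : ℚ_[p]) - (y : ℚ_[p])).valuation
  have hpow : (0:ℝ) < ‖s‖ ^ v := zpow_pos hs0 _
  calc DeltaTilde D m s * ‖s‖ ^ v
      ≤ (‖s‖ ^ (-v) * ‖omegaM D m s ξ x - omegaM D m s ξ y‖)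
        * ‖s‖ ^ v := mul_le_mul_of_nonneg_right hle hpow.le
    _ = (‖s‖ ^ (-v) * ‖s‖ ^ v)
        * ‖omegaM D m s ξ x - omegaM D m s ξ y‖ := by ring
    _ = ‖omegaM D m s ξ x - omegaM D m s ξ y‖ := by
        rw [← zpow_add₀ (ne_of_gt hs0)]
        simp

end OmegaAux


open OmegaAux

/-- Equip `ℝ × ℤ_p` with `ρ̂((ξ,x),(η,y)) = max(|ξ−η|, |x−y|_p^{1/D_s})`. Then
(1) `(ξ,x) ↦ (ξ, ω_s^{(m)}(ξ,x))` is Lipschitz, and (2) if `Δ̃_s^m > 0` it is a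
bi-Lipschitz embedding. -/
theorem omegaM_lipschitz_and_embedding {p : ℕ} [Fact p.Prime] (D : PadicDigits p)
    (m : ℕ∞) (s : ℂ) (hs0 : 0 < ‖s‖) (hs1 : ‖s‖ < 1) :
    (∃ C > 0, ∀ u v : ℝ × ℤ_[p],
        max |u.1 - v.1| (‖omegaM D m s u.1 u.2 - omegaM D m s v.1 v.2‖)
          ≤ C * max |u.1 - v.1| (‖u.2 - v.2‖ ^ (1 / scalingDim p s))) ∧
      (0 < DeltaTilde D m s → ∃ c > 0, ∀ u v : ℝ × ℤ_[p],
        c * max |u.1 - v.1| (‖u.2 - v.2‖ ^ (1 / scalingDim p s))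
          ≤ max |u.1 - v.1| (‖omegaM D m s u.1 u.2 - omegaM D m s v.1 v.2‖)) := by
  have h1a : 0 < 1 - ‖s‖ := by linarith
  have hpi := Real.pi_pos
  set a := ‖s‖ with ha
  set K1 := 2 * Real.pi * (1 - a)⁻¹ with hK1def
  set K2 := 2 * (1 - a)⁻¹ with hK2def
  have hK1 : 0 < K1 := by rw [hK1def]; positivity
  have hK2 : 0 < K2 := by rw [hK2def]; positivity
  constructor
  · refine ⟨K1 + K2 + 1, by positivity, ?_⟩
    rintro ⟨ξ, x⟩ ⟨η, y⟩
    dsimp only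
    set M := max |ξ - η| (‖x - y‖ ^ (1 / scalingDim p s)) with hM
    have hM0 : 0 ≤ M := le_trans (abs_nonneg _) (le_max_left _ _)
    have hMξ : |ξ - η| ≤ M := le_max_left _ _
    have hMT : ‖x - y‖ ^ (1 / scalingDim p s) ≤ M := le_max_right _ _
    refine max_le (by nlinarith) ?_
    have tri : ‖omegaM D m s ξ x - omegaM D m s η y‖
        ≤ ‖omegaM D m s ξ x - omegaM D m s η x‖
          + ‖omegaM D m s η x - omegaM D m s η y‖ :=
      norm_sub_le_norm_sub_add_norm_sub _ _ _
    have h1 : ‖omegaM D m s ξ x - omegaM D m s η x‖ ≤ K1 * |ξ - η| :=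
      omega_sub_xi D m hs1 ξ η x
    have h2 : ‖omegaM D m s η x - omegaM D m s η y‖
        ≤ K2 * (‖x - y‖ ^ (1 / scalingDim p s)) := by
      by_cases hxy : x = y
      · subst hxy
        simp only [sub_self, norm_zero]
        have h0 : (0:ℝ) ≤ ‖(0:ℤ_[p])‖ ^ (1 / scalingDim p s) :=
          Real.rpow_nonneg (norm_nonneg _) _
        nlinarith [Real.rpow_nonneg (le_refl (0:ℝ)) (1 / scalingDim p s)]
      · have hle := omega_sub_x D m hs0 hs1 η hxy
        rw [← norm_rpow_eq hs0 hs1 hxy] at hle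
        exact hle
    nlinarith
  · intro hΔ
    set Δ := DeltaTilde D m s with hΔdef
    set ε := min 1 (Δ / (2 * K1)) with hεdef
    have hεpos : 0 < ε := lt_min one_pos (by positivity)
    have hε1 : ε ≤ 1 := min_le_left _ _
    have hεK : K1 * ε ≤ Δ / 2 := by
      have h2 : ε ≤ Δ / (2 * K1) := min_le_right _ _
      calc K1 * ε ≤ K1 * (Δ / (2 * K1)) := by gcongr
        _ = Δ / 2 := by field_simp
    refine ⟨min ε (Δ / 2), lt_min hεpos (by positivity), ?_⟩
    rintro ⟨ξ, x⟩ ⟨η, y⟩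
    dsimp only
    set c := min ε (Δ / 2) with hcdef
    have hc0 : 0 < c := lt_min hεpos (by positivity)
    have hcε : c ≤ ε := min_le_left _ _
    have hcΔ : c ≤ Δ / 2 := min_le_right _ _
    set T := ‖x - y‖ ^ (1 / scalingDim p s) with hTdef
    have hT0 : 0 ≤ T := Real.rpow_nonneg (norm_nonneg _) _
    by_cases hcase : ε * T ≤ |ξ - η|
    · have hMle : max |ξ - η| T ≤ |ξ - η| / ε := by
        apply max_le
        · rw [le_div_iff₀ hεpos]
          nlinarith [abs_nonneg (ξ - η)]
        · rw [le_div_iff₀ hεpos]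
          nlinarith
      calc c * max |ξ - η| T ≤ ε * (|ξ - η| / ε) := by
            have hd0 : 0 ≤ |ξ - η| / ε := by positivity
            have := le_trans (mul_le_mul_of_nonneg_left hMle hc0.le)
              (mul_le_mul_of_nonneg_right hcε hd0)
            exact this
        _ = |ξ - η| := by field_simp
        _ ≤ max |ξ - η| (‖omegaM D m s ξ x - omegaM D m s η y‖) :=
            le_max_left _ _
    · push_neg at hcase
      have hTpos : 0 < T := by nlinarith [abs_nonneg (ξ - η)]
      have hxy : x ≠ y := by
        intro h
        rw [hTdef, h] at hTpos
        simp only [sub_self, norm_zero] at hTpos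
        rw [Real.zero_rpow (ne_of_gt (r_pos hs0 hs1))] at hTpos
        exact lt_irrefl 0 hTpos
      have hTval : T = a ^ (((x : ℚ_[p]) - (y : ℚ_[p])).valuation) :=
        norm_rpow_eq hs0 hs1 hxy
      have hd := deltaTilde_mul_le D m hs0 ξ hxy
      rw [← hTval] at hd
      have hξη : ‖omegaM D m s η y - omegaM D m s ξ y‖ ≤ K1 * |ξ - η| := by
        have := omega_sub_xi D m hs1 η ξ y
        rw [abs_sub_comm] at this
        exact this
      have tri : ‖omegaM D m s ξ x - omegaM D m s ξ y‖
          ≤ ‖omegaM D m s ξ x - omegaM D m s η y‖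
            + ‖omegaM D m s η y - omegaM D m s ξ y‖ :=
        norm_sub_le_norm_sub_add_norm_sub _ _ _
      have hlow : Δ * T - K1 * |ξ - η|
          ≤ ‖omegaM D m s ξ x - omegaM D m s η y‖ := by linarith
      have hmaxT : max |ξ - η| T = T := max_eq_right (le_of_lt (lt_of_lt_of_le hcase
        (by nlinarith)))
      calc c * max |ξ - η| T = c * T := by rw [hmaxT]
        _ ≤ Δ * T - K1 * |ξ - η| := by nlinarith [abs_nonneg (ξ - η)]
        _ ≤ ‖omegaM D m s ξ x - omegaM D m s η y‖ := hlow
        _ ≤ max |ξ - η| (‖omegaM D m s ξ x - omegaM D m s η y‖) :=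
            le_max_right _ _
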